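/- arXiv:1703.05152 — 10 statements merged into one kernel-verified Lean document; each statement's English description precedes it below -/
import Mathlib

section
/- Assume Samuels' conjecture holds, i.e., for every n ≥ 1, every sequence μ_1 ≥ … ≥ μ_n > 0 with μ_1 + … + μ_n = 1, every δ > 0, and all independent non-negative random variables X_1, …, X_n each with expectation 1, one has P(∑_{i=1}^n μ_i X_i < 1+δ) ≥ min_{1 ≤ i ≤ n} ∏_{j=1}^i (1 − μ_j/((1+δ) − ∑_{k=i+1}^n μ_k)). Then Feige's conjecture holds: for every such n, μ_1 ≥ … ≥ μ_n > 0 with ∑ μ_i = 1, every δ > 0, and all independent non-negative random variables X_1, …, X_n each with expectation 1, one has P(∑_{i=1}^n μ_i X_i < 1+δ) ≥ min(δ/(δ+M), 1/e), where M = μ_1. -/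
/-!
Each term of the minimum in Samuels' bound is estimated separately. For the `i`-th term let
`s = μ₁ + ⋯ + μᵢ ≥ M`, so that the denominator is `t = δ + s`. As `μⱼ ≤ M`, Bernoulli's inequality
gives `1 - μⱼ / t ≥ (1 - M / t) ^ (μⱼ / M)`, hence the product is at least `(1 - M / t) ^ (s / M)`.
In the variables `y = t / M ≥ d + 1`, `d = δ / M` this is `(1 - 1 / y) ^ (y - d)`, whose logarithm
`logBound d y = (y - d) log (1 - 1 / y)` equals `log (d / (d + 1))` at `y = d + 1` and tends to `-1`.
Its second derivative has the sign of `(2d - 1) y - d` and its derivative tends to `0`, so the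
derivative can only change sign from `+` to `-`: `logBound d` is unimodal on `[d + 1, ∞)` and stays
above the smaller of its two end values.
-/

open MeasureTheory ProbabilityTheory Filter Real Set Topology

theorem Finset.sum_Iic_add_sum_Ioi {ι R : Type*} [Fintype ι] [LinearOrder ι]
    [LocallyFiniteOrderBot ι] [LocallyFiniteOrderTop ι] [AddCommMonoid R] (f : ι → R) (i : ι) :
    ∑ j ∈ Iic i, f j + ∑ j ∈ Ioi i, f j = ∑ j, f j := by
  rw [← Finset.sum_filter_add_sum_filter_not Finset.univ (· ≤ i)]
  simp only [not_le, Finset.filter_ge_eq_Iic, Finset.filter_lt_eq_Ioi]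

theorem min_le_of_hasDerivAt_of_deriv_nonpos_persists {f f' : ℝ → ℝ} {a b L : ℝ}
    (hf : ∀ x, a ≤ x → HasDerivAt f (f' x) x)
    (hf' : ∀ c u, a ≤ c → c ≤ u → f' c ≤ 0 → f' u ≤ 0)
    (hL : Tendsto f atTop (𝓝 L)) (hab : a ≤ b) : min (f a) L ≤ f b := by
  by_cases h : ∃ c ∈ Icc a b, f' c ≤ 0
  · obtain ⟨c, ⟨hac, hcb⟩, hc⟩ := h
    have hanti : AntitoneOn f (Ici b) := by
      refine antitoneOn_of_hasDerivWithinAt_nonpos (convex_Ici b)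
        (fun x hx => (hf x (hab.trans hx)).continuousAt.continuousWithinAt)
        (fun x hx => (hf x (hab.trans (interior_subset hx))).hasDerivWithinAt)
        (fun x hx => hf' c x hac (hcb.trans (interior_subset hx)) hc)
    refine min_le_of_right_le (le_of_tendsto hL ?_)
    filter_upwards [eventually_ge_atTop b] with x hx
    exact hanti self_mem_Ici hx hx
  · push Not at h
    have hmono : MonotoneOn f (Icc a b) := by
      refine monotoneOn_of_hasDerivWithinAt_nonneg (convex_Icc a b)
        (fun x hx => (hf x hx.1).continuousAt.continuousWithinAt)
        (fun x hx => (hf x (interior_subset hx).1).hasDerivWithinAt)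
        (fun x hx => (h x (interior_subset hx)).le)
    exact min_le_of_left_le (hmono (left_mem_Icc.2 hab) (right_mem_Icc.2 hab) hab)

namespace Feige

noncomputable def logBound (d y : ℝ) : ℝ := (y - d) * log (1 - y⁻¹)

noncomputable def logBoundDeriv (d y : ℝ) : ℝ := log (1 - y⁻¹) + (y - d) / (y * (y - 1))

variable {d y : ℝ}

theorem hasDerivAt_log_one_sub_inv (hy : 1 < y) :
    HasDerivAt (fun x => log (1 - x⁻¹)) (1 / (y * (y - 1))) y := by
  have hy0 : y ≠ 0 := by positivity
  have h1 : 1 - y⁻¹ ≠ 0 := by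
    have : y⁻¹ < 1 := inv_lt_one_of_one_lt₀ hy
    linarith
  convert ((hasDerivAt_inv hy0).const_sub 1).log h1 using 1
  field_simp

theorem hasDerivAt_logBound (hy : 1 < y) : HasDerivAt (logBound d) (logBoundDeriv d y) y := by
  have hy0 : y ≠ 0 := by positivity
  have hy1 : y - 1 ≠ 0 := sub_ne_zero.2 hy.ne'
  refine (((hasDerivAt_id' y).sub_const d).mul (hasDerivAt_log_one_sub_inv hy)).congr_deriv ?_
  simp only [logBoundDeriv]
  field_simp

theorem hasDerivAt_logBoundDeriv (hy : 1 < y) :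
    HasDerivAt (logBoundDeriv d) (((2 * d - 1) * y - d) / (y * (y - 1)) ^ 2) y := by
  have hy0 : y ≠ 0 := by positivity
  have hy1 : y - 1 ≠ 0 := sub_ne_zero.2 hy.ne'
  have hden : HasDerivAt (fun x => x * (x - 1)) (2 * y - 1) y := by
    refine ((hasDerivAt_id' y).mul ((hasDerivAt_id' y).sub_const 1)).congr_deriv ?_
    ring
  refine ((hasDerivAt_log_one_sub_inv hy).add
    (((hasDerivAt_id' y).sub_const d).div hden (mul_ne_zero hy0 hy1))).congr_deriv ?_
  field_simp
  ring

theorem tendsto_log_one_sub_inv : Tendsto (fun y : ℝ => log (1 - y⁻¹)) atTop (𝓝 0) := by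
  simpa using (tendsto_inv_atTop_zero.const_sub (1 : ℝ)).log (by norm_num)

theorem tendsto_logBound : Tendsto (logBound d) atTop (𝓝 (-1)) := by
  have h := (tendsto_mul_log_one_add_div_atTop (-1)).sub
    (tendsto_log_one_sub_inv.const_mul d)
  rw [mul_zero, sub_zero] at h
  refine h.congr fun y => ?_
  simp only [logBound, neg_div, ← sub_eq_add_neg, one_div]
  ring

theorem tendsto_logBoundDeriv : Tendsto (logBoundDeriv d) atTop (𝓝 0) := by
  have hinv : Tendsto (fun y : ℝ => (y - 1)⁻¹) atTop (𝓝 0) :=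
    tendsto_inv_atTop_zero.comp (tendsto_atTop_add_const_right _ (-1) tendsto_id)
  have h := tendsto_log_one_sub_inv.add
    ((tendsto_inv_atTop_zero.const_mul d |>.const_sub 1).mul hinv)
  rw [mul_zero, add_zero] at h
  refine h.congr' ?_
  filter_upwards [eventually_gt_atTop 1] with y hy
  have hy0 : y ≠ 0 := by positivity
  have hy1 : y - 1 ≠ 0 := sub_ne_zero.2 hy.ne'
  simp only [logBoundDeriv]
  field_simp

theorem logBoundDeriv_nonpos_of_le {c u : ℝ} (hd : 0 < d) (hc : 1 < c) (hcu : c ≤ u)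
    (h : logBoundDeriv d c ≤ 0) : logBoundDeriv d u ≤ 0 := by
  have key := min_le_of_hasDerivAt_of_deriv_nonpos_persists (f := fun y => -logBoundDeriv d y)
    (fun x hx => (hasDerivAt_logBoundDeriv (hc.trans_le hx)).neg) ?_
    (by simpa using tendsto_logBoundDeriv.neg) hcu
  · rw [min_eq_right (neg_nonneg.2 h)] at key
    linarith
  intro c' u' hc' hcu' h'
  have hD : 0 < (c' * (c' - 1)) ^ 2 := by
    have : 1 < c' := hc.trans_le hc'
    have : 0 < c' - 1 := by linarith
    positivity
  have hℓ : 0 ≤ (2 * d - 1) * c' - d := by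
    have := (le_div_iff₀ hD).1 (neg_nonpos.1 h')
    linarith
  refine neg_nonpos.2 (div_nonneg ?_ (sq_nonneg _))
  nlinarith

theorem min_le_logBound (hd : 0 < d) (hy : d + 1 ≤ y) :
    min (log (d / (d + 1))) (-1) ≤ logBound d y := by
  have key := min_le_of_hasDerivAt_of_deriv_nonpos_persists
    (fun x hx => hasDerivAt_logBound (by linarith))
    (fun c u hc hcu => logBoundDeriv_nonpos_of_le hd (by linarith) hcu) tendsto_logBound hy
  have hd1 : d + 1 ≠ 0 := by positivity
  have h_left : logBound d (d + 1) = log (d / (d + 1)) := by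
    rw [logBound, add_sub_cancel_left, one_mul]
    congr 1
    field_simp
    ring
  rwa [h_left] at key

theorem min_le_one_sub_inv_rpow (hd : 0 < d) (hy : d + 1 ≤ y) :
    min (d / (d + 1)) (exp (-1)) ≤ (1 - y⁻¹) ^ (y - d) := by
  have hpos : 0 < 1 - y⁻¹ := by
    have : y⁻¹ < 1 := inv_lt_one_of_one_lt₀ (by linarith)
    linarith
  rw [rpow_def_of_pos hpos, ← exp_log (by positivity : 0 < d / (d + 1)),
    ← exp_monotone.map_min, exp_le_exp, mul_comm]
  exact min_le_logBound hd hy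

end Feige

theorem min_le_one_sub_div_rpow {M δ s : ℝ} (hM : 0 < M) (hδ : 0 < δ) (hs : M ≤ s) :
    min (δ / (δ + M)) (exp (-1)) ≤ (1 - M / (δ + s)) ^ (s / M) := by
  have key := Feige.min_le_one_sub_inv_rpow (d := δ / M) (y := (δ + s) / M) (div_pos hδ hM)
    (by rw [div_add_one hM.ne', div_le_div_iff_of_pos_right hM]; linarith)
  have hδM : δ + M ≠ 0 := by positivity
  rwa [show δ / M / (δ / M + 1) = δ / (δ + M) by field_simp, inv_div,
    show (δ + s) / M - δ / M = s / M by ring] at key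

theorem one_sub_div_rpow_sum_div_le_prod {ι : Type*} (s : Finset ι) {a : ι → ℝ} {M t : ℝ}
    (hM : 0 < M) (hMt : M < t) (ha : ∀ i ∈ s, 0 ≤ a i ∧ a i ≤ M) :
    (1 - M / t) ^ ((∑ i ∈ s, a i) / M) ≤ ∏ i ∈ s, (1 - a i / t) := by
  have ht : 0 < t := hM.trans hMt
  have hMt' : M / t < 1 := (div_lt_one ht).2 hMt
  rw [Finset.sum_div, rpow_sum_of_pos (by linarith)]
  refine Finset.prod_le_prod (fun i _ => by positivity) fun i hi => ?_
  obtain ⟨ha0, haM⟩ := ha i hi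
  calc (1 - M / t) ^ (a i / M) = (1 + -(M / t)) ^ (a i / M) := by rw [← sub_eq_add_neg]
    _ ≤ 1 + a i / M * -(M / t) :=
      rpow_one_add_le_one_add_mul_self (by linarith [div_pos hM ht]) (by positivity)
        ((div_le_one hM).2 haM)
    _ = 1 - a i / t := by field_simp; ring

/-- Samuels' conjecture implies Feige's conjecture. -/
theorem samuels_implies_feige :
    -- Samuels' conjecture:
    (∀ (Ω : Type) (_ : MeasurableSpace Ω) (P : Measure Ω), IsProbabilityMeasure P →
      ∀ (n : ℕ) (hn : 0 < n) (μ : Fin n → ℝ), Antitone μ → (∀ i, 0 < μ i) →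
        ∑ i, μ i = 1 → ∀ δ : ℝ, 0 < δ →
        ∀ X : Fin n → Ω → ℝ, (∀ i, Measurable (X i)) →
          (∀ i ω, 0 ≤ X i ω) → (∀ i, ∫ ω, X i ω ∂P = 1) →
          iIndepFun X P →
          Finset.univ.inf' (Finset.univ_nonempty_iff.mpr ⟨⟨0, hn⟩⟩)
              (fun i : Fin n =>
                ∏ j ∈ Finset.Iic i,
                  (1 - μ j / ((1 + δ) - ∑ k ∈ Finset.Ioi i, μ k))) ≤
            (P {ω | ∑ i, μ i * X i ω < 1 + δ}).toReal) →
    -- Feige's conjecture: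
    ∀ (Ω : Type) (_ : MeasurableSpace Ω) (P : Measure Ω), IsProbabilityMeasure P →
      ∀ (n : ℕ) (hn : 0 < n) (μ : Fin n → ℝ), Antitone μ → (∀ i, 0 < μ i) →
        ∑ i, μ i = 1 → ∀ δ : ℝ, 0 < δ →
        ∀ X : Fin n → Ω → ℝ, (∀ i, Measurable (X i)) →
          (∀ i ω, 0 ≤ X i ω) → (∀ i, ∫ ω, X i ω ∂P = 1) →
          iIndepFun X P →
          min (δ / (δ + μ ⟨0, hn⟩)) (1 / Real.exp 1) ≤
            (P {ω | ∑ i, μ i * X i ω < 1 + δ}).toReal := by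
  intro samuels Ω _ P hP n hn μ hμ hμ_pos hμ_sum δ hδ X hXm hX0 hX1 hXindep
  refine le_trans (Finset.le_inf' _ _ fun i _ => ?_) (samuels Ω _ P hP n hn μ hμ hμ_pos hμ_sum
    δ hδ X hXm hX0 hX1 hXindep)
  set M := μ ⟨0, hn⟩
  set s := ∑ j ∈ Finset.Iic i, μ j
  have hM_le : ∀ j, μ j ≤ M := fun j => hμ (Nat.zero_le j)
  have hMs : M ≤ s := Finset.single_le_sum (fun j _ => (hμ_pos j).le)
    (Finset.mem_Iic.2 (Nat.zero_le i))
  have hden : (1 + δ) - ∑ k ∈ Finset.Ioi i, μ k = δ + s := by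
    linarith [Finset.sum_Iic_add_sum_Ioi μ i]
  rw [hden, one_div, ← exp_neg]
  calc min (δ / (δ + M)) (exp (-1)) ≤ (1 - M / (δ + s)) ^ (s / M) :=
        min_le_one_sub_div_rpow (hμ_pos _) hδ hMs
    _ ≤ ∏ j ∈ Finset.Iic i, (1 - μ j / (δ + s)) :=
        one_sub_div_rpow_sum_div_le_prod _ (hμ_pos _) (by linarith)
          fun j _ => ⟨(hμ_pos j).le, hM_le j⟩
end

section
/- If μ ∈ [0,1] and ρ ∈ (0, ∞), then Φ(μ, ρ) ≥ log(min(ρ/(μ+ρ), 1/e)). -/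
/-!
Let `ρ₀ = μ / (e - 1)`, so that `ρ₀ / (μ + ρ₀) = 1 / e`. For `ρ ≥ ρ₀` the bound is `-1` and
`log (1 - μ / (1 + ρ))` increases with `ρ`; for `ρ ≤ ρ₀` the bound is `log (ρ / (μ + ρ))` and
`log (1 - μ / (1 + ρ)) - μ log (ρ / (μ + ρ))` decreases with `ρ` on `(0, μ]`. Both cases thus reduce
to `ρ = ρ₀`, where the claim reads `e - 1 + μ ≤ e^μ (e - 1 - (e - 2) μ)` for `μ ∈ [0, 1]`. The
difference of the two sides vanishes at `0` and `1`, and its derivative `e^μ (1 - (e - 2) μ) - 1`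
is concave and vanishes at `0`, so the difference first increases and then decreases on `[0, 1]`.
-/

/-- The function `Φ : [0,1] × (0,∞) → ℝ` from the paper, extended by the given
formulas to all of `ℝ × ℝ`. -/
noncomputable def Phi (μ ρ : ℝ) : ℝ :=
  if μ = 0 then -1 / (1 + ρ) else (1 / μ) * Real.log (1 - μ / (1 + ρ))

open Real Set

theorem min_le_of_hasDerivAt_of_concaveOn {F f : ℝ → ℝ} {a b t : ℝ}
    (hF : ∀ x ∈ Icc a b, HasDerivAt F (f x) x) (hf : ConcaveOn ℝ (Icc a b) f) (ha : 0 ≤ f a)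
    (ht : t ∈ Icc a b) : min (F a) (F b) ≤ F t := by
  have hF_cont {c d : ℝ} (h : Icc c d ⊆ Icc a b) : ContinuousOn F (Icc c d) :=
    fun x hx => (hF x (h hx)).continuousAt.continuousWithinAt
  have hF_deriv {c d : ℝ} (h : Icc c d ⊆ Icc a b) :
      ∀ x ∈ interior (Icc c d), HasDerivWithinAt F (f x) (interior (Icc c d)) x :=
    fun x hx => (hF x (h (interior_subset hx))).hasDerivWithinAt
  have hf_nonneg {x y : ℝ} (hx : x ∈ Icc a b) (hfx : 0 ≤ f x) (hy : y ∈ Icc a x) : 0 ≤ f y :=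
    (le_min ha hfx).trans (hf.min_le_of_mem_Icc (left_mem_Icc.2 (ht.1.trans ht.2)) hx hy)
  rcases le_or_gt 0 (f t) with hft | hft
  · have hsub : Icc a t ⊆ Icc a b := Icc_subset_Icc_right ht.2
    have hmono := monotoneOn_of_hasDerivWithinAt_nonneg (convex_Icc a t) (hF_cont hsub)
      (hF_deriv hsub) fun x hx => hf_nonneg ht hft (interior_subset hx)
    exact (min_le_left _ _).trans (hmono (left_mem_Icc.2 ht.1) (right_mem_Icc.2 ht.1) ht.1)
  · have hsub : Icc t b ⊆ Icc a b := Icc_subset_Icc_left ht.1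
    have hanti := antitoneOn_of_hasDerivWithinAt_nonpos (convex_Icc t b) (hF_cont hsub)
      (hF_deriv hsub) fun x hx => le_of_not_gt fun hfx =>
        hft.not_ge (hf_nonneg (hsub (interior_subset hx)) hfx.le ⟨ht.1, (interior_subset hx).1⟩)
    exact (min_le_right _ _).trans (hanti (left_mem_Icc.2 ht.2) (right_mem_Icc.2 ht.2) ht.2)

theorem concaveOn_exp_mul_one_sub_mul {c : ℝ} (hc : 1 / 2 ≤ c) :
    ConcaveOn ℝ (Ici 0) fun x => exp x * (1 - c * x) := by
  have hderiv (d x : ℝ) :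
      HasDerivAt (fun y => exp y * (d - c * y)) (exp x * (d - c - c * x)) x := by
    refine ((hasDerivAt_exp x).mul (((hasDerivAt_id x).const_mul c).const_sub d)).congr_deriv ?_
    simp only [id]
    ring
  refine concaveOn_of_hasDerivWithinAt2_nonpos (f'' := fun x => exp x * (1 - 2 * c - c * x))
    (convex_Ici 0)
    (continuous_exp.mul (continuous_const.sub (continuous_id.const_mul c))).continuousOn
    (fun x _ => (hderiv 1 x).hasDerivWithinAt) ?_ fun x hx => ?_
  · exact fun x _ => ((hderiv (1 - c) x).congr_deriv (by ring)).hasDerivWithinAt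
  · rw [interior_Ici] at hx
    have hx : 0 < x := hx
    exact mul_nonpos_of_nonneg_of_nonpos (exp_pos x).le (by nlinarith)

theorem exp_one_sub_one_add_le_exp_mul {t : ℝ} (ht : t ∈ Icc 0 1) :
    exp 1 - 1 + t ≤ exp t * (exp 1 - 1 - (exp 1 - 2) * t) := by
  set F : ℝ → ℝ := fun x => exp x * (exp 1 - 1 - (exp 1 - 2) * x) - (exp 1 - 1) - x
  have hF (x : ℝ) : HasDerivAt F (exp x * (1 - (exp 1 - 2) * x) + -1) x := by
    refine ((((hasDerivAt_exp x).mul (((hasDerivAt_id x).const_mul (exp 1 - 2)).const_sub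
      (exp 1 - 1))).sub_const (exp 1 - 1)).sub (hasDerivAt_id x)).congr_deriv ?_
    simp only [id]
    ring
  have := min_le_of_hasDerivAt_of_concaveOn (fun x _ => hF x)
    (((concaveOn_exp_mul_one_sub_mul (by linarith [exp_one_gt_d9])).subset Icc_subset_Ici_self
      (convex_Icc 0 1)).add_const (-1)) (by simp) ht
  have hF0 : F 0 = 0 := by simp [F]
  have hF1 : F 1 = 0 := by simp only [F]; ring
  simp only [hF0, hF1, min_self, F] at this
  linarith

theorem neg_le_log_one_sub_div_of_mul_eq {μ ρ : ℝ} (hμ : μ ∈ Icc 0 1)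
    (hρ : (exp 1 - 1) * ρ = μ) : -μ ≤ log (1 - μ / (1 + ρ)) := by
  have he : 1 < exp 1 - 1 := by linarith [exp_one_gt_d9]
  have hρ0 : 0 ≤ ρ := by nlinarith [hμ.1]
  have hexp := exp_one_sub_one_add_le_exp_mul hμ
  have hval : 1 - μ / (1 + ρ) = (exp 1 - 1 - (exp 1 - 2) * μ) / (exp 1 - 1 + μ) := by
    rw [← hρ]; field_simp; ring
  rw [← log_exp (-μ), hval, exp_neg]
  refine log_le_log (inv_pos.2 (exp_pos μ)) ?_
  rw [inv_eq_one_div, div_le_div_iff₀ (exp_pos μ) (by linarith [hμ.1])]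
  linarith

theorem antitoneOn_log_one_sub_div_sub_mul_log {μ : ℝ} (hμ : μ ≤ 1) :
    AntitoneOn (fun ρ => log (1 - μ / (1 + ρ)) - μ * log (ρ / (μ + ρ))) (Ioc 0 μ) := by
  have hderiv {ρ : ℝ} (hρ : 0 < ρ) (hρμ : ρ ≤ μ) : HasDerivAt
      (fun ρ => log (1 - μ / (1 + ρ)) - μ * log (ρ / (μ + ρ)))
      (μ / ((1 + ρ - μ) * (1 + ρ)) - μ ^ 2 / (ρ * (μ + ρ))) ρ := by
    have h1 : HasDerivAt (fun ρ => 1 - μ / (1 + ρ)) (μ / (1 + ρ) ^ 2) ρ := by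
      refine (((hasDerivAt_const ρ μ).div ((hasDerivAt_id ρ).const_add 1) ?_).const_sub 1).congr_deriv
        ?_
      · simp only [id]; positivity
      · simp only [id]; field_simp; ring
    have h2 : HasDerivAt (fun ρ => ρ / (μ + ρ)) (μ / (μ + ρ) ^ 2) ρ := by
      refine ((hasDerivAt_id ρ).div ((hasDerivAt_id ρ).const_add μ) ?_).congr_deriv ?_
      · simp only [id]; linarith
      · simp only [id]; ring
    refine ((h1.log ?_).sub ((h2.log ?_).const_mul μ)).congr_deriv ?_
    · exact (sub_pos.2 ((div_lt_one (by linarith)).2 (by linarith))).ne'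
    · exact (div_pos hρ (by linarith)).ne'
    · field_simp
  refine antitoneOn_of_hasDerivWithinAt_nonpos
    (f' := fun ρ => μ / ((1 + ρ - μ) * (1 + ρ)) - μ ^ 2 / (ρ * (μ + ρ))) (convex_Ioc 0 μ) ?_ ?_ ?_
  · exact fun ρ hρ => (hderiv hρ.1 hρ.2).continuousAt.continuousWithinAt
  · rw [interior_Ioc]
    exact fun ρ hρ => (hderiv hρ.1 hρ.2.le).hasDerivWithinAt
  · rw [interior_Ioc]
    rintro ρ ⟨hρ, hρμ⟩
    rw [sub_nonpos, div_le_div_iff₀ (by nlinarith) (by nlinarith)]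
    -- `μ (1 + ρ - μ) (1 + ρ) - ρ (μ + ρ) = (1 - μ) (μ + ρ (μ - ρ))`
    nlinarith [mul_nonneg (mul_nonneg (hρ.trans hρμ).le (sub_nonneg.2 hμ))
      (add_nonneg (hρ.trans hρμ).le (mul_nonneg hρ.le (sub_nonneg.2 hρμ.le)))]

theorem mul_log_min_le_log_one_sub_div {μ ρ : ℝ} (hμ : μ ∈ Ioc 0 1) (hρ : 0 < ρ) :
    μ * log (min (ρ / (μ + ρ)) (1 / exp 1)) ≤ log (1 - μ / (1 + ρ)) := by
  obtain ⟨hμ0, hμ1⟩ := hμ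
  have he : 1 < exp 1 - 1 := by linarith [exp_one_gt_d9]
  obtain ⟨ρ₀, hρ₀⟩ : ∃ ρ₀, (exp 1 - 1) * ρ₀ = μ := ⟨μ / (exp 1 - 1), mul_div_cancel₀ _ (by linarith)⟩
  have hρ₀_pos : 0 < ρ₀ := by nlinarith
  have h_threshold := neg_le_log_one_sub_div_of_mul_eq ⟨hμ0.le, hμ1⟩ hρ₀
  rcases le_total ρ₀ ρ with hρ₀ρ | hρρ₀
  · calc μ * log (min (ρ / (μ + ρ)) (1 / exp 1)) ≤ μ * log (1 / exp 1) := by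
          gcongr
          exact min_le_right _ _
      _ = -μ := by rw [one_div, log_inv, log_exp, mul_neg_one]
      _ ≤ log (1 - μ / (1 + ρ₀)) := h_threshold
      _ ≤ log (1 - μ / (1 + ρ)) := by
          gcongr
          exact sub_pos.2 ((div_lt_one (by positivity)).2 (by linarith))
  · have hρ₀μ : ρ₀ ≤ μ := by nlinarith
    have hμρ₀ : μ + ρ₀ = exp 1 * ρ₀ := by linear_combination -hρ₀
    have hanti := antitoneOn_log_one_sub_div_sub_mul_log hμ1 ⟨hρ, hρρ₀.trans hρ₀μ⟩ ⟨hρ₀_pos, hρ₀μ⟩ hρρ₀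
    simp only [hμρ₀] at hanti
    calc μ * log (min (ρ / (μ + ρ)) (1 / exp 1)) ≤ μ * log (ρ / (μ + ρ)) := by
          gcongr
          exact min_le_left _ _
      _ ≤ log (1 - μ / (1 + ρ)) := by
          rw [div_mul_cancel_right₀ hρ₀_pos.ne', log_inv, log_exp] at hanti
          linarith

theorem Phi_lower_bound (μ ρ : ℝ) (hμ : μ ∈ Set.Icc (0:ℝ) 1) (hρ : ρ ∈ Set.Ioi (0:ℝ)) :
    Phi μ ρ ≥ Real.log (min (ρ / (μ + ρ)) (1 / Real.exp 1)) := by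
  have hρ : 0 < ρ := hρ
  rcases hμ.1.eq_or_lt with rfl | hμ0
  · have hlog_min : log (min (ρ / (0 + ρ)) (1 / exp 1)) ≤ -1 := by
      rw [zero_add, div_self hρ.ne', ← log_exp (-1), exp_neg, ← one_div]
      exact log_le_log (by positivity) (min_le_right _ _)
    have : -1 ≤ -1 / (1 + ρ) := by
      rw [neg_div, neg_le_neg_iff, div_le_one (by linarith)]
      linarith
    rw [Phi, if_pos rfl]
    linarith
  · rw [Phi, if_neg hμ0.ne', ge_iff_le, one_div_mul_eq_div, le_div_iff₀ hμ0, mul_comm]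
    exact mul_log_min_le_log_one_sub_div ⟨hμ0, hμ.2⟩ hρ
end

section
/- For every α ∈ (0, ∞), the function h_α : [0,1] → ℝ defined by h_α(t) = Φ(t, αt) is concave on [0,1]. -/
open Set intervalIntegral

theorem convexOn_intervalIntegral {E : Type*} [AddCommMonoid E] [Module ℝ E] {D : Set E}
    {f : ℝ → E → ℝ} {a b : ℝ} (hab : a ≤ b) (hf : ∀ s ∈ Icc a b, ConvexOn ℝ D (f s))
    (hint : ∀ x ∈ D, IntervalIntegrable (fun s => f s x) MeasureTheory.volume a b) :
    ConvexOn ℝ D fun x => ∫ s in a..b, f s x := by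
  have hD : Convex ℝ D := (hf a ⟨le_rfl, hab⟩).1
  refine ⟨hD, fun x hx y hy μ ν hμ hν hμν => ?_⟩
  dsimp only
  calc ∫ s in a..b, f s (μ • x + ν • y)
      ≤ ∫ s in a..b, (μ * f s x + ν * f s y) :=
        integral_mono_on hab (hint _ (hD hx hy hμ hν hμν))
          (((hint x hx).const_mul μ).add ((hint y hy).const_mul ν))
          fun s hs => (hf s hs).2 hx hy hμ hν hμν
    _ = μ • (∫ s in a..b, f s x) + ν • ∫ s in a..b, f s y := by
        rw [smul_eq_mul, smul_eq_mul,
          integral_add ((hint x hx).const_mul μ) ((hint y hy).const_mul ν),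
          integral_const_mul, integral_const_mul]

theorem convexOn_inv_add_mul {D : Set ℝ} {p c : ℝ} (hD : Convex ℝ D)
    (hpos : ∀ t ∈ D, 0 < p + c * t) : ConvexOn ℝ D fun t => (p + c * t)⁻¹ := by
  let g : ℝ →ᵃ[ℝ] ℝ := (LinearMap.lsmul ℝ ℝ c).toAffineMap + AffineMap.const ℝ ℝ p
  have := ((convexOn_zpow (-1)).comp_affineMap g).subset (fun t ht => ?_) hD
  · refine this.congr fun t _ => ?_
    simp [g, add_comm]
  · show 0 < c * t + p
    linarith [hpos t ht]

theorem one_add_sub_mul_pos {α s t : ℝ} (hα : 0 < α) (hs : s ∈ Icc (0:ℝ) 1)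
    (ht : t ∈ Icc (0:ℝ) 1) : 0 < 1 + (α - s) * t := by
  obtain ⟨hs0, hs1⟩ := hs
  obtain ⟨ht0, ht1⟩ := ht
  nlinarith [mul_nonneg (sub_nonneg.2 hs1) ht0, mul_nonneg hα.le ht0,
    mul_nonneg hα.le (sub_nonneg.2 ht1)]

theorem Phi_mul_self_eq_neg_integral {α t : ℝ} (hα : 0 < α) (ht : t ∈ Icc (0:ℝ) 1) :
    Phi t (α * t) = -∫ s in (0:ℝ)..1, (1 + (α - s) * t)⁻¹ := by
  rcases ht.1.eq_or_lt with rfl | htpos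
  · simp [Phi]
  have hq : 0 < 1 + α * t := by positivity
  have hp : 0 < 1 + α * t - t := by
    linarith [one_add_sub_mul_pos hα ⟨zero_le_one, le_rfl⟩ ht]
  have hsub : ∫ s in (0:ℝ)..1, (1 + (α - s) * t)⁻¹
      = ∫ s in (0:ℝ)..1, (fun x => x⁻¹) (1 + α * t - t * s) := by
    congr 1; ext s; ring_nf
  rw [hsub, integral_comp_sub_mul _ htpos.ne', mul_one, mul_zero, sub_zero,
    integral_inv_of_pos hp hq, Phi, if_neg htpos.ne', smul_eq_mul,
    show 1 - t / (1 + α * t) = ((1 + α * t) / (1 + α * t - t))⁻¹ by field_simp,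
    Real.log_inv]
  ring

theorem Phi_t_alpha_t_concave (α : ℝ) (hα : α ∈ Set.Ioi (0:ℝ)) :
    ConcaveOn ℝ (Set.Icc (0:ℝ) 1) (fun t => Phi t (α * t)) := by
  have hconvex : ∀ s ∈ Icc (0:ℝ) 1, ConvexOn ℝ (Icc (0:ℝ) 1) fun t => (1 + (α - s) * t)⁻¹ :=
    fun s hs => convexOn_inv_add_mul (convex_Icc 0 1) fun t ht => one_add_sub_mul_pos hα hs ht
  have hint : ∀ t ∈ Icc (0:ℝ) 1,
      IntervalIntegrable (fun s => (1 + (α - s) * t)⁻¹) MeasureTheory.volume 0 1 :=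
    fun t ht => (ContinuousOn.inv₀ (by fun_prop) fun s hs =>
      (one_add_sub_mul_pos hα hs ht).ne').intervalIntegrable_of_Icc zero_le_one
  exact (convexOn_intervalIntegral zero_le_one hconvex hint).neg.congr fun t ht =>
    (Phi_mul_self_eq_neg_integral hα ht).symm
end

section
/- For every α ∈ (0, ∞) and every t ∈ (0, 1), the quantity η(t) = t·(2 + (6α−3)t + 4(α²−α)t²)/((1 − t + αt)²(1 + αt)²) + 2·log(1 − t/(1 + αt)) is strictly negative. -/
/-!
Put `u = t / (1 + α t) ∈ (0, 1)`, so that the logarithm is `log (1 - u)`. Since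
`-log (1 - u) = ∑ uⁿ / n` has positive terms, it strictly exceeds the Taylor polynomial
`T₄(u) = u + u²/2 + u³/3 + u⁴/4`. Clearing denominators, `2 T₄(u)` minus the rational part of `η`
equals `t³` times a cubic in `t` over a positive denominator, and that cubic has positive
coefficients in the Bernstein basis `(1-t)³, t(1-t)², t²(1-t), t³` for every `α > 0`.
-/

open Finset Real

lemma sum_range_pow_div_lt_neg_log_one_sub {u : ℝ} (hu₀ : 0 < u) (hu₁ : u < 1) (n : ℕ) :
    ∑ i ∈ range n, u ^ (i + 1) / (i + 1) < -log (1 - u) := by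
  have hsum := hasSum_pow_div_log_of_abs_lt_one (abs_lt.2 ⟨by linarith, hu₁⟩)
  calc ∑ i ∈ range n, u ^ (i + 1) / (i + 1)
      < ∑ i ∈ range (n + 1), u ^ (i + 1) / (i + 1) := by
        rw [sum_range_succ]
        exact lt_add_of_pos_right _ (by positivity)
    _ ≤ -log (1 - u) := sum_le_hasSum _ (fun i _ ↦ by positivity) hsum

def bernsteinCubic (b₀ b₁ b₂ b₃ t : ℝ) : ℝ :=
  b₀ * (1 - t) ^ 3 + b₁ * t * (1 - t) ^ 2 + b₂ * t ^ 2 * (1 - t) + b₃ * t ^ 3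

lemma bernsteinCubic_pos {b₀ b₁ b₂ b₃ t : ℝ} (h₀ : 0 < b₀) (h₁ : 0 < b₁) (h₂ : 0 < b₂)
    (h₃ : 0 < b₃) (ht₀ : 0 < t) (ht₁ : t < 1) : 0 < bernsteinCubic b₀ b₁ b₂ b₃ t := by
  have : 0 < 1 - t := by linarith
  unfold bernsteinCubic
  positivity

noncomputable def etaGapCubic (α t : ℝ) : ℝ :=
  bernsteinCubic (4 * α ^ 2 - 4 * α + 4 / 3) (12 * α ^ 3 - 2 * α ^ 2 - 8 * α + 13 / 3)
    (12 * α ^ 4 + 8 * α ^ 3 - 12 * α ^ 2 - 10 / 3 * α + 4)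
    (4 * α ^ 5 + 6 * α ^ 4 - 8 / 3 * α ^ 3 - 17 / 3 * α ^ 2 + 2) t

lemma etaGapCubic_pos {α t : ℝ} (hα : 0 < α) (ht₀ : 0 < t) (ht₁ : t < 1) :
    0 < etaGapCubic α t := by
  have hsq := sq_nonneg (2 * α - 1)
  have hαsq := mul_nonneg hα.le hsq
  have hα2sq := mul_nonneg (mul_nonneg hα.le hα.le) hsq
  refine bernsteinCubic_pos (by nlinarith) (by nlinarith [sq_nonneg (60 * α - 33)]) ?_ ?_ ht₀ ht₁
  · nlinarith [sq_nonneg (α ^ 2 + α - 1), sq_nonneg (6 * α ^ 2 + 2 * α - 3), sq_nonneg (α - 1)]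
  · nlinarith [sq_nonneg (α ^ 2 - 1), sq_nonneg (3 * α ^ 2 + 2 * α - 2),
      mul_nonneg hα.le (sq_nonneg (α ^ 2 + α - 1)),
      mul_nonneg (mul_nonneg hα.le hα.le) (sq_nonneg (α - 1))]

lemma eta_rational_part_eq {α t : ℝ} (hs : 1 + α * t ≠ 0) (hd : 1 - t + α * t ≠ 0) :
    t * (2 + (6 * α - 3) * t + 4 * (α ^ 2 - α) * t ^ 2) /
        ((1 - t + α * t) ^ 2 * (1 + α * t) ^ 2) =
      2 * ∑ i ∈ range 4, (t / (1 + α * t)) ^ (i + 1) / (i + 1) -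
        t ^ 3 * etaGapCubic α t / (2 * (1 + α * t) ^ 4 * (1 - t + α * t) ^ 2) := by
  norm_num only [sum_range_succ, sum_range_zero, etaGapCubic, bernsteinCubic]
  -- `field_simp` looks for nonvanishing facts in its own normal form, where `α * t` is `t * α`.
  have : 1 + t * α ≠ 0 := by rwa [mul_comm]
  have : 1 - t + t * α ≠ 0 := by rwa [mul_comm]
  field_simp
  ring

theorem eta_neg (α : ℝ) (hα : α ∈ Set.Ioi (0:ℝ)) (t : ℝ) (ht : t ∈ Set.Ioo (0:ℝ) 1) :
    t * (2 + (6 * α - 3) * t + 4 * (α ^ 2 - α) * t ^ 2) /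
        ((1 - t + α * t) ^ 2 * (1 + α * t) ^ 2) +
      2 * Real.log (1 - t / (1 + α * t)) < 0 := by
  have hα : 0 < α := hα
  obtain ⟨ht₀, ht₁⟩ := ht
  have hs : 0 < 1 + α * t := by positivity
  have hd : 0 < 1 - t + α * t := by nlinarith
  have hu₀ : 0 < t / (1 + α * t) := div_pos ht₀ hs
  have hu₁ : t / (1 + α * t) < 1 := by rw [div_lt_one hs]; nlinarith
  have hlog := sum_range_pow_div_lt_neg_log_one_sub hu₀ hu₁ 4
  have hgap : 0 < t ^ 3 * etaGapCubic α t / (2 * (1 + α * t) ^ 4 * (1 - t + α * t) ^ 2) := by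
    have := etaGapCubic_pos hα ht₀ ht₁
    positivity
  rw [eta_rational_part_eq hs.ne' hd.ne']
  linarith
end

section
/- Let n ≥ 1, μ_1 ≥ … ≥ μ_n > 0 with μ_1 + … + μ_n = 1, let M = μ_1 and δ > 0. Suppose X_2 = … = X_n = 1 almost surely, and X_1 is independent of them with P(X_1 = (δ+M)/M) = M/(δ+M) and P(X_1 = 0) = δ/(δ+M). Then each X_i is non-negative with expectation 1, and P(∑_{i=1}^n μ_i X_i < 1+δ) = δ/(δ+M). (Hence equality can hold in Feige's conjectured bound.) -/
open MeasureTheory ProbabilityTheory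

/-!
Apart from `X₁`, every summand is `μ i`, so `∑ μ i X i = 1 + M (X₁ - 1)`. Almost surely `X₁` takes
only the values `(δ + M) / M` and `0`, since their probabilities add up to one; on the first value the
sum equals `1 + δ`, on the second it is `1 - M < 1 + δ`. Hence the event `∑ μ i X i < 1 + δ` is
almost surely `{X₁ = 0}`, of probability `δ / (δ + M)`.
-/

section TwoPointDistribution

variable {Ω : Type*} [MeasurableSpace Ω] {P : Measure Ω} {X : Ω → ℝ} {a b : ℝ}

lemma ae_eq_or_eq_of_measure_add_eq_one [IsProbabilityMeasure P] (hX : Measurable X)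
    (hab : a ≠ b) (h : P {ω | X ω = a} + P {ω | X ω = b} = 1) :
    ∀ᵐ ω ∂P, X ω = a ∨ X ω = b := by
  have hlevel (c : ℝ) : MeasurableSet {ω | X ω = c} := hX (measurableSet_singleton c)
  have hdisj : Disjoint {ω | X ω = a} {ω | X ω = b} :=
    Set.disjoint_left.2 fun ω ha hb => hab (ha.symm.trans hb)
  have hunion : P ({ω | X ω = a} ∪ {ω | X ω = b}) = 1 := by
    rwa [measure_union hdisj (hlevel b)]
  rw [← prob_compl_eq_zero_iff ((hlevel a).union (hlevel b))] at hunion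
  exact measure_eq_zero_iff_ae_notMem.1 hunion |>.mono fun ω hω => by
    simpa [or_iff_not_imp_left] using hω

lemma integral_eq_measureReal_mul_of_ae_eq_or_eq_zero (hX : Measurable X)
    (h : ∀ᵐ ω ∂P, X ω = a ∨ X ω = 0) : ∫ ω, X ω ∂P = P.real {ω | X ω = a} * a := by
  have hind : X =ᵐ[P] {ω | X ω = a}.indicator fun _ => a := by
    filter_upwards [h] with ω hω
    by_cases hωa : X ω = a
    · simp [hωa]
    · simp [Set.indicator_apply, hω.resolve_left hωa]
  have hlevel : MeasurableSet {ω | X ω = a} := hX (measurableSet_singleton a)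
  rw [integral_congr_ae hind, integral_indicator_const _ hlevel, smul_eq_mul]

end TwoPointDistribution

lemma Fintype.sum_mul_eq_sum_add_mul_sub_one {ι : Type*} [Fintype ι] (μ x : ι → ℝ) (i₀ : ι)
    (h : ∀ i ≠ i₀, x i = 1) : ∑ i, μ i * x i = ∑ i, μ i + μ i₀ * (x i₀ - 1) := by
  rw [← sub_eq_iff_eq_add', ← Finset.sum_sub_distrib]
  simp_rw [← mul_sub_one]
  exact Fintype.sum_eq_single i₀ fun i hi => by simp [h i hi]

/-- Equality can hold in Feige's conjectured bound: the example where
`X_2 = … = X_n = 1` and `X_1` is a suitable two-valued random variable. -/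
theorem feige_equality_example
    (Ω : Type) (_ : MeasurableSpace Ω) (P : Measure Ω) (hP : IsProbabilityMeasure P)
    (n : ℕ) (hn : 0 < n) (μ : Fin n → ℝ) (hpos : ∀ i, 0 < μ i)
    (hsum : ∑ i, μ i = 1) (δ : ℝ) (hδ : 0 < δ)
    (X : Fin n → Ω → ℝ) (hmeas : ∀ i, Measurable (X i))
    (hone : ∀ i : Fin n, i ≠ ⟨0, hn⟩ → ∀ᵐ ω ∂P, X i ω = 1)
    (htop : P {ω | X ⟨0, hn⟩ ω = (δ + μ ⟨0, hn⟩) / μ ⟨0, hn⟩} =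
      ENNReal.ofReal (μ ⟨0, hn⟩ / (δ + μ ⟨0, hn⟩)))
    (hzero : P {ω | X ⟨0, hn⟩ ω = 0} = ENNReal.ofReal (δ / (δ + μ ⟨0, hn⟩))) :
    (∀ i, ∀ᵐ ω ∂P, 0 ≤ X i ω) ∧ (∀ i, ∫ ω, X i ω ∂P = 1) ∧
      (P {ω | ∑ i, μ i * X i ω < 1 + δ}).toReal = δ / (δ + μ ⟨0, hn⟩) := by
  set i₀ : Fin n := ⟨0, hn⟩
  set M := μ i₀
  have hM : 0 < M := hpos i₀
  have hfirst : ∀ᵐ ω ∂P, X i₀ ω = (δ + M) / M ∨ X i₀ ω = 0 := by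
    refine ae_eq_or_eq_of_measure_add_eq_one (hmeas i₀) (by positivity) ?_
    rw [htop, hzero, ← ENNReal.ofReal_add (by positivity) (by positivity), ← add_div,
      add_comm M, div_self (by positivity), ENNReal.ofReal_one]
  have hrest : ∀ᵐ ω ∂P, ∀ i ≠ i₀, X i ω = 1 :=
    ae_all_iff.2 fun i => Filter.eventually_imp_distrib_left.2 (hone i)
  refine ⟨fun i => ?_, fun i => ?_, ?_⟩
  · by_cases hi : i = i₀
    · subst hi
      filter_upwards [hfirst] with ω hω
      rcases hω with hω | hω <;> rw [hω]
      positivity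
    · filter_upwards [hone i hi] with ω hω
      exact hω ▸ zero_le_one
  · by_cases hi : i = i₀
    · subst hi
      rw [integral_eq_measureReal_mul_of_ae_eq_or_eq_zero (hmeas i₀) hfirst, measureReal_def,
        htop, ENNReal.toReal_ofReal (by positivity)]
      field_simp
    · simp [integral_congr_ae (hone i hi)]
  · have hevent : {ω | ∑ i, μ i * X i ω < 1 + δ} =ᵐ[P] {ω | X i₀ ω = 0} := by
      rw [Filter.eventuallyEq_set]
      filter_upwards [hfirst, hrest] with ω hω hωrest
      rw [Fintype.sum_mul_eq_sum_add_mul_sub_one μ _ i₀ hωrest, hsum]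
      rcases hω with hω | hω <;> rw [hω]
      · have hshift : M * ((δ + M) / M - 1) = δ := by field_simp; ring
        rw [hshift, lt_self_iff_false, false_iff]
        positivity
      · simp only [iff_true]
        linarith
    rw [measure_congr hevent, hzero, ENNReal.toReal_ofReal (by positivity)]
end

section
/- For every constant c > 1/e, Feige's conjectured bound fails with c in place of 1/e: there exist n ≥ 1, δ > 0, weights μ_1 = … = μ_n = 1/n (so M = 1/n), and independent non-negative random variables X_1, …, X_n each with expectation 1, such that P(∑_{i=1}^n μ_i X_i < 1+δ) < min(δ/(δ + M), c). -/
/-!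
Take `X_i = (N + 1) B_i` with `B_i` independent Bernoulli of parameter `1 / (N + 1)`,
weights `1 / N` and `δ = 9 / (10 N)`. A single nonzero summand equals `1 + 1 / N > 1 + δ`,
so `∑ X_i / N < 1 + δ` is the event that every `B_i` vanishes, of probability
`(1 - 1 / (N + 1)) ^ N`, which tends to `1 / e`. Meanwhile `δ / (δ + 1 / N) = 9 / 19 > 1 / e`,
so for large `N` the probability lies below `min (9 / 19) c`.
-/

open MeasureTheory ProbabilityTheory Filter Topology unitInterval

lemma Finset.sum_ite_lt_iff_forall_false {ι : Type*} [Fintype ι] {b c : ℝ} (hc : 0 < c)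
    (hcb : c ≤ b) (ω : ι → Bool) :
    ∑ i, (if ω i then b else 0) < c ↔ ∀ i, ω i = false := by
  refine ⟨fun hlt i => ?_, fun h => by simpa [h] using hc⟩
  by_contra hi
  rw [Bool.not_eq_false] at hi
  have hle : b ≤ ∑ j, (if ω j then b else 0) := by
    simpa [hi] using Finset.single_le_sum (f := fun j => if ω j then b else 0)
      (fun j _ => by split_ifs <;> linarith) (Finset.mem_univ i)
  linarith

lemma tendsto_one_sub_one_div_succ_pow :
    Tendsto (fun n : ℕ => (1 - 1 / ((n : ℝ) + 1)) ^ n) atTop (𝓝 (Real.exp (-1))) := by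
  have h := (Real.tendsto_one_add_div_pow_exp 1).inv₀ (Real.exp_pos 1).ne'
  rw [← Real.exp_neg] at h
  refine h.congr' ((eventually_gt_atTop 0).mono fun n hn => ?_)
  have hn' : (0 : ℝ) < n := by exact_mod_cast hn
  rw [← inv_pow]
  congr 1
  field_simp
  ring

lemma Real.exp_neg_one_lt_nine_div_nineteen : Real.exp (-1) < 9 / 19 := by
  rw [Real.exp_neg, inv_lt_comm₀ (Real.exp_pos 1) (by norm_num)]
  linarith [Real.exp_one_gt_d9]

section Bernoulli

variable {ι : Type*} [Fintype ι] (p : I)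

lemma measureReal_pi_bernoulliMeasure_forall_false :
    (Measure.pi fun _ : ι => Ber(true, false, p)).real {ω | ∀ i, ω i = false}
      = (1 - p) ^ Fintype.card ι := by
  have hset : {ω : ι → Bool | ∀ i, ω i = false} = Set.univ.pi fun _ => {false} := by
    ext ω; simp
  rw [hset, measureReal_def, Measure.pi_pi]
  simp

lemma integral_ite_pi_bernoulliMeasure (i : ι) (a : ℝ) :
    ∫ ω, (if ω i then a else 0) ∂(Measure.pi fun _ : ι => Ber(true, false, p)) = p * a := by
  refine (integral_comp_eval (X := fun _ => Bool) (i := i)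
    (f := fun b : Bool => if b then a else 0) (by fun_prop)).trans ?_
  simp [integral_bernoulliMeasure]

end Bernoulli

/-- Feige's conjectured bound fails for any constant `c > 1/e` in place of `1/e`. -/
theorem feige_constant_optimal (c : ℝ) (hc : 1 / Real.exp 1 < c) :
    ∃ (n : ℕ), 0 < n ∧ ∃ (δ : ℝ), 0 < δ ∧
      ∃ (Ω : Type) (_ : MeasurableSpace Ω) (P : Measure Ω) (_ : IsProbabilityMeasure P)
        (X : Fin n → Ω → ℝ),
        (∀ i, Measurable (X i)) ∧
        iIndepFun X P ∧
        (∀ i ω, 0 ≤ X i ω) ∧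
        (∀ i, ∫ ω, X i ω ∂P = 1) ∧
        (P {ω | ∑ i, (1 / (n : ℝ)) * X i ω < 1 + δ}).toReal <
          min (δ / (δ + 1 / (n : ℝ))) c := by
  have hlim : Real.exp (-1) < min (9 / 19) c :=
    lt_min Real.exp_neg_one_lt_nine_div_nineteen (by rwa [Real.exp_neg, inv_eq_one_div])
  obtain ⟨N, hN, hlt⟩ : ∃ N : ℕ, 0 < N ∧ (1 - 1 / ((N : ℝ) + 1)) ^ N < min (9 / 19) c :=
    ((eventually_gt_atTop 0).and
      (tendsto_one_sub_one_div_succ_pow.eventually_lt_const hlim)).exists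
  have hN' : (0 : ℝ) < N := by exact_mod_cast hN
  let p : I := ⟨1 / ((N : ℝ) + 1), div_mem zero_le_one (by positivity) (by linarith)⟩
  let g : Bool → ℝ := fun b => if b then (N : ℝ) + 1 else 0
  let X : Fin N → (Fin N → Bool) → ℝ := fun i ω => g (ω i)
  have hevent :
      {ω | ∑ i, (1 / (N : ℝ)) * X i ω < 1 + 9 / (10 * N)} = {ω | ∀ i, ω i = false} := by
    ext ω
    simp only [X, g, mul_ite, mul_zero, Set.mem_ofPred_eq]
    refine Finset.sum_ite_lt_iff_forall_false (by positivity) ?_ ω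
    field_simp
    linarith
  have hratio : 9 / (10 * N) / (9 / (10 * N) + 1 / (N : ℝ)) = 9 / 19 := by
    field_simp
    ring
  refine ⟨N, hN, 9 / (10 * N), by positivity, Fin N → Bool, inferInstance,
    Measure.pi fun _ => Ber(true, false, p), inferInstance, X,
    fun i => (measurable_of_countable g).comp (measurable_pi_apply i),
    iIndepFun_pi (X := fun _ => g) fun _ => (measurable_of_countable g).aemeasurable,
    fun i ω => by simp only [X, g]; positivity, fun i => ?_, ?_⟩
  · rw [integral_ite_pi_bernoulliMeasure]
    exact one_div_mul_cancel (by positivity)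
  · rw [← measureReal_def, hevent, measureReal_pi_bernoulliMeasure_forall_false, hratio]
    simpa [p] using hlt
end

section
/- For every μ ∈ (0, 1] and every ρ ≥ μ/(e−1), one has Φ(μ, ρ) ≥ −1; equivalently, (1 − μ/(1+ρ))^{1/μ} ≥ 1/e whenever ρ ≥ μ/(e−1). -/
open Real Finset

lemma exp_quad (x : ℝ) (hx : 0 ≤ x) : 1 + x + x^2/2 ≤ Real.exp x := by
  have h := Real.sum_le_exp_of_nonneg hx 3
  simp [Finset.sum_range_succ, Nat.factorial] at h
  nlinarith [h]

lemma exp_upper (x : ℝ) (h0 : 0 ≤ x) (h1 : x ≤ 1) :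
    Real.exp x ≤ 1 + x + x^2/2 + x^3/6 + x^4/24 + x^5/100 := by
  have h := Real.exp_bound' h0 h1 (n := 5) (by norm_num)
  simp [Finset.sum_range_succ, Nat.factorial] at h
  nlinarith [h]

lemma key (μ : ℝ) (h0 : 0 < μ) (h1 : μ ≤ 1) :
    Real.exp (-μ) * (Real.exp 1 - 1 + μ) ≤ (Real.exp 1 - 1) - μ * (Real.exp 1 - 2) := by
  have he1 : (2.7182818283 : ℝ) < Real.exp 1 := Real.exp_one_gt_d9
  have he2 : Real.exp 1 < 2.7182818286 := Real.exp_one_lt_d9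
  rcases le_or_gt μ (39/100) with hc | hc
  · have hq := exp_quad μ h0.le
    have hpos : (0:ℝ) < Real.exp μ := Real.exp_pos μ
    rw [Real.exp_neg, inv_mul_le_iff₀ hpos]
    have hcoef : (0:ℝ) ≤ (Real.exp 1 - 1) - μ * (Real.exp 1 - 2) := by nlinarith
    have h3 : (0:ℝ) ≤ 3 - Real.exp 1 - μ * (Real.exp 1 - 2) := by
      nlinarith [mul_le_mul_of_nonneg_right hc (show (0:ℝ) ≤ Real.exp 1 - 2 by nlinarith)]
    have h4 : Real.exp 1 - 1 + μ ≤ ((Real.exp 1 - 1) - μ * (Real.exp 1 - 2)) * (1 + μ + μ^2/2) := by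
      nlinarith [mul_nonneg (sq_nonneg μ) h3]
    have h5 : ((Real.exp 1 - 1) - μ * (Real.exp 1 - 2)) * (1 + μ + μ^2/2)
        ≤ ((Real.exp 1 - 1) - μ * (Real.exp 1 - 2)) * Real.exp μ :=
      mul_le_mul_of_nonneg_left hq hcoef
    nlinarith [h4, h5]
  · set ν := 1 - μ with hν
    clear_value ν
    have hv0 : (0:ℝ) ≤ ν := by rw [hν]; linarith
    have hv1 : ν ≤ 61/100 := by rw [hν]; linarith
    have hexp : Real.exp (-μ) = Real.exp ν / Real.exp 1 := by
      rw [← Real.exp_sub, hν]; ring_nf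
    have hu := exp_upper ν hv0 (by linarith)
    have hpos : (0:ℝ) < Real.exp 1 := Real.exp_pos 1
    rw [hexp, div_mul_eq_mul_div, div_le_iff₀ hpos]
    have hμν : μ = 1 - ν := by rw [hν]; ring
    rw [hμν]
    set U : ℝ := 1 + ν + ν^2/2 + ν^3/6 + ν^4/24 + ν^5/100 with hU
    clear_value U
    have hUpow : (0:ℝ) ≤ ν^2 ∧ (0:ℝ) ≤ ν^3 ∧ (0:ℝ) ≤ ν^4 ∧ (0:ℝ) ≤ ν^5 :=
      ⟨pow_nonneg hv0 2, pow_nonneg hv0 3, pow_nonneg hv0 4, pow_nonneg hv0 5⟩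
    obtain ⟨hp2, hp3, hp4, hp5⟩ := hUpow
    have hp6 : (0:ℝ) ≤ ν^6 := pow_nonneg hv0 6
    have hU1 : (1:ℝ) ≤ U := by rw [hU]; linarith
    have hbase : Real.exp 1 - 1 + (1 - ν) = Real.exp 1 - ν := by ring
    have step1 : Real.exp ν * (Real.exp 1 - 1 + (1 - ν)) ≤ U * (Real.exp 1 - ν) := by
      rw [hbase]
      exact mul_le_mul_of_nonneg_right hu (by nlinarith)
    refine step1.trans ?_
    -- goal: U * (e - ν) ≤ (e - 1 - (1-ν)(e-2)) * e = e + ν e² - 2νe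
    have ha : ν * (2.7182818283:ℝ)^2 ≤ ν * (Real.exp 1)^2 := by
      apply mul_le_mul_of_nonneg_left _ hv0
      nlinarith
    have hb : (U + 2*ν - 1) * Real.exp 1 ≤ (U + 2*ν - 1) * 2.7182818286 := by
      apply mul_le_mul_of_nonneg_left he2.le
      linarith
    -- rational polynomial part
    have hrat : U * ν + ν * (2.7182818283:ℝ)^2 - (U + 2*ν - 1) * 2.7182818286 ≥ 0 := by
      rw [hU]
      nlinarith [mul_nonneg hv0 (sub_nonneg.2 hv1), hv0, hp3, hp4, hp5, hp6]
    nlinarith [ha, hb, hrat]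

theorem Phi_ge_neg_one (μ : ℝ) (hμ : μ ∈ Set.Ioc (0:ℝ) 1) (ρ : ℝ)
    (hρ : μ / (Real.exp 1 - 1) ≤ ρ) :
    Phi μ ρ ≥ -1 ∧ (1 - μ / (1 + ρ)) ^ (1 / μ) ≥ 1 / Real.exp 1 := by
  obtain ⟨h0, h1⟩ := hμ
  have he1 : (2.7182818283 : ℝ) < Real.exp 1 := Real.exp_one_gt_d9
  have hel : (0:ℝ) < Real.exp 1 - 1 := by linarith
  have hρe : μ ≤ ρ * (Real.exp 1 - 1) := (div_le_iff₀ hel).mp hρ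
  have h1ρ : (0:ℝ) < 1 + ρ := by nlinarith
  have hd : (0:ℝ) < Real.exp 1 - 1 + μ := by linarith
  have hkey := key μ h0 h1
  have h2 : μ / (1 + ρ) ≤ μ * (Real.exp 1 - 1) / (Real.exp 1 - 1 + μ) := by
    rw [div_le_div_iff₀ h1ρ hd]
    nlinarith [mul_le_mul_of_nonneg_left hρe h0.le]
  have h3 : Real.exp (-μ) ≤ 1 - μ * (Real.exp 1 - 1) / (Real.exp 1 - 1 + μ) := by
    have heq : 1 - μ * (Real.exp 1 - 1) / (Real.exp 1 - 1 + μ)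
        = ((Real.exp 1 - 1 + μ) - μ * (Real.exp 1 - 1)) / (Real.exp 1 - 1 + μ) := by
      field_simp
    rw [heq, le_div_iff₀ hd]
    nlinarith [hkey]
  have hx : Real.exp (-μ) ≤ 1 - μ / (1 + ρ) := by linarith
  have hlt : (0:ℝ) < 1 - μ / (1 + ρ) := lt_of_lt_of_le (Real.exp_pos _) hx
  constructor
  · unfold Phi
    rw [if_neg h0.ne']
    have hlog : -μ ≤ Real.log (1 - μ / (1 + ρ)) := (Real.le_log_iff_exp_le hlt).2 hx
    have hm : (0:ℝ) ≤ 1 / μ := by positivity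
    have := mul_le_mul_of_nonneg_left hlog hm
    have hone : (1 / μ) * (-μ) = -1 := by field_simp
    rw [ge_iff_le]
    linarith [this, hone.le, hone.ge]
  · have hr := Real.rpow_le_rpow (Real.exp_pos (-μ)).le hx (by positivity : (0:ℝ) ≤ 1/μ)
    have heq : Real.exp (-μ) ^ ((1:ℝ)/μ) = 1 / Real.exp 1 := by
      rw [← Real.exp_mul, show -μ * (1/μ) = (-1:ℝ) by field_simp, Real.exp_neg, one_div]
    rw [ge_iff_le, ← heq]
    exact hr
end

section
/- For every μ ∈ (0, 1) and every ρ ∈ (0, μ/(e−1)], one has Φ(μ, ρ) ≥ log(ρ/(μ+ρ)); equivalently, (1 − μ/(1+ρ))^{1/μ} ≥ ρ/(μ+ρ) whenever 0 < ρ ≤ μ/(e−1). -/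
/-!
Multiplying by `μ`, the claim is that
`phiGap μ ρ = log (1 - μ / (1 + ρ)) - μ log (ρ / (μ + ρ))` is nonnegative. Its derivative in `ρ`
has the sign of `-(1 - μ) (μ (1 + ρ) - ρ²)`, so it is antitone on `(0, μ]` and it suffices to
check `ρ* = μ / (e - 1)`. There `ρ* / (μ + ρ*) = 1 / e`, and the claim becomes the
one-variable inequality `e - 1 + μ ≤ e^μ (e - 1 - (e - 2) μ)` on `[0, 1]`. It is an equality at
both ends, so it is proved separately near `0` (Taylor polynomial of degree 4) and near `1`
(`e μ ≤ e^μ`).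
-/

open Real Set

lemma exp_one_sub_one_add_le_exp_mul_of_le {μ : ℝ} (h0 : 0 ≤ μ) (h1 : μ ≤ 9 / 10) :
    exp 1 - 1 + μ ≤ exp μ * (exp 1 - 1 - μ * (exp 1 - 2)) := by
  have he : exp 1 < 2.7182818286 := exp_one_lt_d9
  have he' : 2.7182818283 < exp 1 := exp_one_gt_d9
  set P := 1 + μ + μ ^ 2 / 2 + μ ^ 3 / 6 + μ ^ 4 / 24
  have hP : P ≤ exp μ := by
    have := sum_le_exp_of_nonneg h0 5
    simpa [P, Finset.sum_range_succ, Nat.factorial] using this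
  have hP1 : 0 ≤ 1 - P * (1 - μ) := by
    have : 1 - P * (1 - μ) = μ ^ 2 / 2 + μ ^ 3 / 3 + μ ^ 4 / 8 + μ ^ 5 / 24 := by ring
    rw [this]; positivity
  have hpoly : 0 ≤ μ * (P - 1) - 1.7182818286 * (1 - P * (1 - μ)) := by
    simp only [P]
    nlinarith [pow_nonneg h0 2, pow_nonneg h0 3, pow_nonneg h0 4, pow_nonneg h0 5,
      mul_nonneg (pow_nonneg h0 2) (sub_nonneg.2 h1),
      mul_nonneg (pow_nonneg h0 3) (sub_nonneg.2 h1),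
      mul_nonneg (pow_nonneg h0 4) (sub_nonneg.2 h1)]
  calc exp 1 - 1 + μ ≤ P * (exp 1 - 1 - μ * (exp 1 - 2)) := by
        linarith [hpoly, mul_nonneg hP1 (by linarith : (0:ℝ) ≤ 2.7182818286 - exp 1)]
    _ ≤ exp μ * (exp 1 - 1 - μ * (exp 1 - 2)) := by
        gcongr
        nlinarith

lemma exp_one_sub_one_add_le_exp_mul_of_ge {μ : ℝ} (h0 : 9 / 10 ≤ μ) (h1 : μ ≤ 1) :
    exp 1 - 1 + μ ≤ exp μ * (exp 1 - 1 - μ * (exp 1 - 2)) := by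
  have he : exp 1 < 2.7182818286 := exp_one_lt_d9
  have he' : 2.7182818283 < exp 1 := exp_one_gt_d9
  have hc : 0 ≤ exp 1 - 1 - μ * (exp 1 - 2) := by nlinarith
  calc exp 1 - 1 + μ ≤ exp 1 * μ * (exp 1 - 1 - μ * (exp 1 - 2)) := by
        have : 0 ≤ exp 1 * (exp 1 - 2) * μ - (exp 1 - 1) := by nlinarith
        nlinarith [mul_nonneg (sub_nonneg.2 h1) this]
    _ ≤ exp μ * (exp 1 - 1 - μ * (exp 1 - 2)) := by
        gcongr
        exact exp_one_mul_le_exp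

lemma exp_one_sub_one_add_le_exp_mul_s14 {μ : ℝ} (h0 : 0 ≤ μ) (h1 : μ ≤ 1) :
    exp 1 - 1 + μ ≤ exp μ * (exp 1 - 1 - μ * (exp 1 - 2)) :=
  (le_total μ (9 / 10)).elim (exp_one_sub_one_add_le_exp_mul_of_le h0)
    fun h => exp_one_sub_one_add_le_exp_mul_of_ge h h1

noncomputable def phiGap (μ ρ : ℝ) : ℝ :=
  log (1 + ρ - μ) - log (1 + ρ) + μ * (log (μ + ρ) - log ρ)

lemma hasDerivAt_phiGap {μ ρ : ℝ} (h0 : 0 ≤ μ) (h1 : μ ≤ 1) (hρ : 0 < ρ) :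
    HasDerivAt (phiGap μ) (μ / ((1 + ρ - μ) * (1 + ρ)) - μ ^ 2 / (ρ * (μ + ρ))) ρ := by
  have hA : 1 + ρ - μ ≠ 0 := by linarith
  have hB : 1 + ρ ≠ 0 := by linarith
  have hC : μ + ρ ≠ 0 := by linarith
  have hid := hasDerivAt_id ρ
  have h := (((hid.const_add 1).sub_const μ).log hA).sub ((hid.const_add 1).log hB) |>.add
    ((((hid.const_add μ).log hC).sub (hid.log hρ.ne')).const_mul μ)
  refine h.congr_deriv ?_
  simp only [id]
  field_simp
  ring

lemma phiGap_antitoneOn {μ : ℝ} (h0 : 0 ≤ μ) (h1 : μ ≤ 1) : AntitoneOn (phiGap μ) (Ioc 0 μ) := by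
  have hd : ∀ ρ ∈ Ioc 0 μ, HasDerivAt (phiGap μ) _ ρ := fun ρ hρ => hasDerivAt_phiGap h0 h1 hρ.1
  refine antitoneOn_of_deriv_nonpos (convex_Ioc 0 μ)
    (fun ρ hρ => (hd ρ hρ).continuousAt.continuousWithinAt)
    (fun ρ hρ => (hd ρ (interior_subset hρ)).differentiableAt.differentiableWithinAt)
    fun ρ hρ => ?_
  rw [interior_Ioc] at hρ
  obtain ⟨hρ0, hρμ⟩ := hρ
  rw [(hd ρ ⟨hρ0, hρμ.le⟩).deriv, sub_nonpos]
  have hA : 0 < 1 + ρ - μ := by linarith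
  -- `μ (1 + ρ - μ)(1 + ρ) - ρ (μ + ρ) = (1 - μ)(μ (1 + ρ) - ρ ^ 2)`
  rw [div_le_div_iff₀ (by positivity) (by positivity)]
  nlinarith [mul_nonneg (sub_nonneg.2 h1) (by nlinarith : 0 ≤ μ * (1 + ρ) - ρ ^ 2)]

lemma phiGap_nonneg_at_bound {μ : ℝ} (h0 : 0 < μ) (h1 : μ ≤ 1) :
    0 ≤ phiGap μ (μ / (exp 1 - 1)) := by
  have he : 2 < exp 1 := by linarith [exp_one_gt_d9]
  set ρ := μ / (exp 1 - 1) with hρ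
  have hρ0 : 0 < ρ := div_pos h0 (by linarith)
  have hμ : μ = (exp 1 - 1) * ρ := by rw [hρ, mul_div_cancel₀]; linarith
  have hlog : log (μ + ρ) - log ρ = 1 := by
    rw [show μ + ρ = exp 1 * ρ by rw [hμ]; ring, log_mul (exp_pos 1).ne' hρ0.ne', log_exp]
    ring
  have hA : 0 < 1 + ρ - μ := by nlinarith
  have hkey : 1 + ρ ≤ exp μ * (1 + ρ - μ) := by
    have h := exp_one_sub_one_add_le_exp_mul_s14 h0.le h1
    rw [show exp 1 - 1 + μ = (exp 1 - 1) * (1 + ρ) by rw [hμ]; ring,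
      show exp 1 - 1 - μ * (exp 1 - 2) = (exp 1 - 1) * (1 + ρ - μ) by rw [hμ]; ring,
      mul_left_comm] at h
    exact le_of_mul_le_mul_left h (by linarith)
  have hlog' : log (1 + ρ) ≤ μ + log (1 + ρ - μ) := by
    calc log (1 + ρ) ≤ log (exp μ * (1 + ρ - μ)) := log_le_log (by linarith) hkey
      _ = μ + log (1 + ρ - μ) := by rw [log_mul (exp_pos μ).ne' hA.ne', log_exp]
  rw [phiGap, hlog]
  linarith

lemma phiGap_eq_mul_sub {μ ρ : ℝ} (h0 : 0 < μ) (h1 : μ ≤ 1) (hρ : 0 < ρ) :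
    phiGap μ ρ = μ * (Phi μ ρ - log (ρ / (μ + ρ))) := by
  have hA : 0 < 1 + ρ - μ := by linarith
  rw [Phi, if_neg h0.ne', show 1 - μ / (1 + ρ) = (1 + ρ - μ) / (1 + ρ) by field_simp,
    log_div hA.ne' (by linarith), log_div hρ.ne' (by linarith), phiGap]
  field_simp
  ring

lemma log_div_le_Phi {μ ρ : ℝ} (h0 : 0 < μ) (h1 : μ ≤ 1) (hρ0 : 0 < ρ)
    (hρ : ρ ≤ μ / (exp 1 - 1)) : log (ρ / (μ + ρ)) ≤ Phi μ ρ := by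
  have hbound : μ / (exp 1 - 1) ≤ μ := div_le_self h0.le (by linarith [exp_one_gt_d9])
  have hgap : 0 ≤ phiGap μ ρ :=
    (phiGap_nonneg_at_bound h0 h1).trans <| phiGap_antitoneOn h0.le h1
      ⟨hρ0, hρ.trans hbound⟩ ⟨hρ0.trans_le hρ, hbound⟩ hρ
  rw [phiGap_eq_mul_sub h0 h1 hρ0] at hgap
  exact sub_nonneg.1 (nonneg_of_mul_nonneg_right hgap h0)

lemma rpow_one_div_eq_exp_Phi {μ ρ : ℝ} (h0 : 0 < μ) (hμρ : μ < 1 + ρ) :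
    (1 - μ / (1 + ρ)) ^ (1 / μ) = exp (Phi μ ρ) := by
  have hbase : 0 < 1 - μ / (1 + ρ) := by
    rw [sub_pos, div_lt_one (by linarith)]
    exact hμρ
  rw [rpow_def_of_pos hbase, Phi, if_neg h0.ne', mul_comm]

theorem Phi_ge_log_ratio (μ : ℝ) (hμ : μ ∈ Set.Ioo (0:ℝ) 1) (ρ : ℝ)
    (hρ : ρ ∈ Set.Ioc (0:ℝ) (μ / (Real.exp 1 - 1))) :
    Phi μ ρ ≥ Real.log (ρ / (μ + ρ)) ∧ (1 - μ / (1 + ρ)) ^ (1 / μ) ≥ ρ / (μ + ρ) := by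
  obtain ⟨hμ0, hμ1⟩ := hμ
  obtain ⟨hρ0, hρ⟩ := hρ
  have hlog := log_div_le_Phi hμ0 hμ1.le hρ0 hρ
  refine ⟨hlog, ?_⟩
  rw [rpow_one_div_eq_exp_Phi hμ0 (by linarith), ge_iff_le,
    ← exp_log (by positivity : 0 < ρ / (μ + ρ))]
  exact exp_le_exp.2 hlog
end

section
/- For every μ ∈ (0, 1), the function g : (0, ∞) → ℝ, g(ρ) = Φ(μ, ρ) − log(ρ/(μ+ρ)), is strictly decreasing on (0, μ/(e−1)]; indeed g'(ρ) = −(1−μ)((1+ρ)μ − ρ²)/(ρ(1+ρ)(1+ρ−μ)(μ+ρ)) < 0 for ρ ∈ (0, μ/(e−1)]. -/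
/-! The numerator `(1 - μ)((1 + ρ)μ - ρ²)` of `g'` is positive once `ρ < μ`, because
then `ρ² < ρμ < (1 + ρ)μ`; and `ρ ≤ μ / (e - 1)` forces `ρ < μ` since `e - 1 > 1`.
The mean value theorem turns the sign of `g'` into strict monotonicity. -/

open Real Set

lemma Phi_of_ne_zero {μ : ℝ} (hμ : μ ≠ 0) (ρ : ℝ) :
    Phi μ ρ = μ⁻¹ * log (1 - μ / (1 + ρ)) := by
  simp [Phi, hμ]

lemma hasDerivAt_Phi_sub_log {μ ρ : ℝ} (hμ : 0 < μ) (hρ : 0 < ρ) (hμρ : μ < 1 + ρ) :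
    HasDerivAt (fun ρ => Phi μ ρ - log (ρ / (μ + ρ)))
      (-((1 - μ) * ((1 + ρ) * μ - ρ ^ 2)) /
        (ρ * (1 + ρ) * (1 + ρ - μ) * (μ + ρ))) ρ := by
  have h1ρ : 0 < 1 + ρ := by linarith
  have hμρ' : 0 < μ + ρ := by linarith
  have hA : HasDerivAt (fun x => 1 - μ / (1 + x)) (μ / (1 + ρ) ^ 2) ρ := by
    refine ((((hasDerivAt_id' ρ).const_add 1).inv h1ρ.ne').const_mul μ
      |>.const_sub 1).congr_deriv ?_
    field_simp
  have hB : HasDerivAt (fun x => x / (μ + x)) (μ / (μ + ρ) ^ 2) ρ := by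
    refine ((hasDerivAt_id' ρ).div ((hasDerivAt_id' ρ).const_add μ) hμρ'.ne').congr_deriv ?_
    field_simp
    ring
  have hA_pos : 0 < 1 - μ / (1 + ρ) := by rwa [sub_pos, div_lt_one h1ρ]
  simp_rw [Phi_of_ne_zero hμ.ne']
  refine (((hA.log hA_pos.ne').const_mul μ⁻¹).sub
    (hB.log (div_pos hρ hμρ').ne')).congr_deriv ?_
  have : 1 + ρ - μ ≠ 0 := by linarith
  field_simp
  ring

lemma sign_deriv_Phi_sub_log {μ ρ : ℝ} (hμ1 : μ < 1) (hρ : 0 < ρ) (hρμ : ρ < μ) :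
    -((1 - μ) * ((1 + ρ) * μ - ρ ^ 2)) / (ρ * (1 + ρ) * (1 + ρ - μ) * (μ + ρ)) < 0 := by
  have hsq : ρ ^ 2 < (1 + ρ) * μ := by nlinarith
  have hnum : 0 < (1 - μ) * ((1 + ρ) * μ - ρ ^ 2) := mul_pos (by linarith) (by linarith)
  have hden : 0 < ρ * (1 + ρ) * (1 + ρ - μ) * (μ + ρ) :=
    mul_pos (mul_pos (mul_pos hρ (by linarith)) (by linarith)) (by linarith)
  exact div_neg_of_neg_of_pos (neg_neg_of_pos hnum) hden

lemma div_exp_one_sub_one_lt {μ : ℝ} (hμ : 0 < μ) : μ / (exp 1 - 1) < μ :=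
  div_lt_self hμ (by linarith [add_one_lt_exp one_ne_zero])

theorem g_strictAnti (μ : ℝ) (hμ : μ ∈ Set.Ioo (0:ℝ) 1) :
    StrictAntiOn (fun ρ => Phi μ ρ - Real.log (ρ / (μ + ρ)))
        (Set.Ioc (0:ℝ) (μ / (Real.exp 1 - 1))) ∧
      ∀ ρ ∈ Set.Ioc (0:ℝ) (μ / (Real.exp 1 - 1)),
        HasDerivAt (fun ρ => Phi μ ρ - Real.log (ρ / (μ + ρ)))
            (-((1 - μ) * ((1 + ρ) * μ - ρ ^ 2)) /
              (ρ * (1 + ρ) * (1 + ρ - μ) * (μ + ρ))) ρ ∧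
          -((1 - μ) * ((1 + ρ) * μ - ρ ^ 2)) /
              (ρ * (1 + ρ) * (1 + ρ - μ) * (μ + ρ)) < 0 := by
  obtain ⟨hμ0, hμ1⟩ := hμ
  have hderiv : ∀ ρ ∈ Ioc 0 (μ / (exp 1 - 1)), _ ∧ _ := fun ρ ⟨hρ, hρle⟩ =>
    have hρμ : ρ < μ := hρle.trans_lt (div_exp_one_sub_one_lt hμ0)
    ⟨hasDerivAt_Phi_sub_log hμ0 hρ (by linarith), sign_deriv_Phi_sub_log hμ1 hρ hρμ⟩
  refine ⟨strictAntiOn_of_hasDerivWithinAt_neg (convex_Ioc _ _)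
    (fun ρ hρ => (hderiv ρ hρ).1.continuousAt.continuousWithinAt)
    (fun ρ hρ => (hderiv ρ (interior_subset hρ)).1.hasDerivWithinAt)
    (fun ρ hρ => (hderiv ρ (interior_subset hρ)).2), hderiv⟩
end

section
/- Let f : ℝ → ℝ, f(t) = (1 + t/(e−1))(1 − e^{−t}) − t. Then f(0) = 0, f'(0) = 0, f''(t) = e^{−t}(3 − e − t)/(e−1), f is convex on [0, 3−e] and concave on [3−e, 1], and f(t) ≥ 0 for every t ∈ [0, 1]. -/
/-!
Differentiating twice gives `f'' t = e^{-t} (3 - e - t) / (e - 1)`, whose sign is that of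
`3 - e - t`; so `f` is convex on `[0, 3 - e]` and concave on `[3 - e, 1]`. On the convex piece `f`
lies above its tangent at `0`, which is the zero line since `f 0 = f' 0 = 0`. On the concave
piece `f` is at least the smaller of its endpoint values, `f (3 - e) ≥ 0` and `f 1 = 0`.
-/

/-- The auxiliary function `f` from Lemma 4 of the paper. -/
noncomputable def f (t : ℝ) : ℝ :=
  (1 + t / (Real.exp 1 - 1)) * (1 - Real.exp (-t)) - t

open Real Set

theorem nonneg_of_convexOn_of_concaveOn {g : ℝ → ℝ} {a b c : ℝ} (hab : a ≤ b) (hbc : b ≤ c)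
    (hconv : ConvexOn ℝ (Icc a b) g) (hconc : ConcaveOn ℝ (Icc b c) g)
    (ha : g a = 0) (hda : HasDerivWithinAt g 0 (Ioi a) a) (hc : g c = 0) :
    ∀ t ∈ Icc a c, 0 ≤ g t := by
  have hleft : ∀ t ∈ Icc a b, 0 ≤ g t := by
    intro t ht
    rcases ht.1.eq_or_lt with rfl | hat
    · exact ha.ge
    have hslope := hconv.le_slope_of_hasDerivWithinAt_Ioi (left_mem_Icc.2 hab) ht hat hda
    rwa [slope_def_field, ha, sub_zero, le_div_iff₀ (sub_pos.2 hat), zero_mul] at hslope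
  intro t ht
  rcases le_total t b with htb | hbt
  · exact hleft t ⟨ht.1, htb⟩
  · calc 0 ≤ min (g b) (g c) := le_min (hleft b ⟨hab, le_rfl⟩) hc.ge
      _ ≤ g t := hconc.min_le_of_mem_Icc (left_mem_Icc.2 hbc) (right_mem_Icc.2 hbc) ⟨hbt, ht.2⟩

lemma exp_one_sub_one_pos : 0 < exp 1 - 1 := by
  linarith [exp_one_gt_d9]

lemma three_sub_exp_one_pos : 0 < 3 - exp 1 := by
  linarith [exp_one_lt_d9]

lemma three_sub_exp_one_lt_one : 3 - exp 1 < 1 := by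
  linarith [exp_one_gt_d9]

lemma f_zero : f 0 = 0 := by simp [f]

lemma f_one : f 1 = 0 := by
  have : exp 1 - 1 ≠ 0 := exp_one_sub_one_pos.ne'
  rw [f, exp_neg]
  field_simp
  ring

noncomputable def f' (t : ℝ) : ℝ :=
  (1 - exp (-t)) / (exp 1 - 1) + (1 + t / (exp 1 - 1)) * exp (-t) - 1

lemma f'_zero : f' 0 = 0 := by simp [f']

lemma hasDerivAt_exp_neg (t : ℝ) : HasDerivAt (fun t ↦ exp (-t)) (-exp (-t)) t := by
  simpa using (hasDerivAt_neg t).exp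

lemma hasDerivAt_one_add_div (t : ℝ) :
    HasDerivAt (fun t ↦ 1 + t / (exp 1 - 1)) (1 / (exp 1 - 1)) t :=
  ((hasDerivAt_id t).div_const _).const_add 1

lemma hasDerivAt_f (t : ℝ) : HasDerivAt f (f' t) t := by
  refine (((hasDerivAt_one_add_div t).mul ((hasDerivAt_exp_neg t).const_sub 1)).sub
    (hasDerivAt_id t)).congr_deriv ?_
  simp only [f']
  ring

lemma deriv_f : deriv f = f' := funext fun t ↦ (hasDerivAt_f t).deriv

lemma hasDerivAt_f' (t : ℝ) :
    HasDerivAt f' (exp (-t) * (3 - exp 1 - t) / (exp 1 - 1)) t := by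
  refine (((((hasDerivAt_exp_neg t).const_sub 1).div_const (exp 1 - 1)).add
    ((hasDerivAt_one_add_div t).mul (hasDerivAt_exp_neg t))).sub_const 1).congr_deriv ?_
  field_simp [exp_one_sub_one_pos.ne']
  ring

lemma convexOn_f : ConvexOn ℝ (Icc 0 (3 - exp 1)) f :=
  convexOn_of_hasDerivWithinAt2_nonneg (convex_Icc _ _)
    (fun t _ ↦ (hasDerivAt_f t).continuousAt.continuousWithinAt)
    (fun t _ ↦ (hasDerivAt_f t).hasDerivWithinAt) (fun t _ ↦ (hasDerivAt_f' t).hasDerivWithinAt)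
    (fun t ht ↦ by
      rw [interior_Icc] at ht
      exact div_nonneg (mul_nonneg (exp_pos _).le (by linarith [ht.2])) exp_one_sub_one_pos.le)

lemma concaveOn_f : ConcaveOn ℝ (Icc (3 - exp 1) 1) f :=
  concaveOn_of_hasDerivWithinAt2_nonpos (convex_Icc _ _)
    (fun t _ ↦ (hasDerivAt_f t).continuousAt.continuousWithinAt)
    (fun t _ ↦ (hasDerivAt_f t).hasDerivWithinAt) (fun t _ ↦ (hasDerivAt_f' t).hasDerivWithinAt)
    (fun t ht ↦ by
      rw [interior_Icc] at ht
      exact div_nonpos_of_nonpos_of_nonneg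
        (mul_nonpos_of_nonneg_of_nonpos (exp_pos _).le (by linarith [ht.1]))
        exp_one_sub_one_pos.le)

theorem f_properties :
    f 0 = 0 ∧ HasDerivAt f 0 0 ∧
      (∀ t : ℝ, HasDerivAt (deriv f)
        (Real.exp (-t) * (3 - Real.exp 1 - t) / (Real.exp 1 - 1)) t) ∧
      ConvexOn ℝ (Set.Icc (0:ℝ) (3 - Real.exp 1)) f ∧
      ConcaveOn ℝ (Set.Icc (3 - Real.exp 1) 1) f ∧
      ∀ t ∈ Set.Icc (0:ℝ) 1, 0 ≤ f t := by
  have hderiv_zero : HasDerivAt f 0 0 := (hasDerivAt_f 0).congr_deriv f'_zero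
  refine ⟨f_zero, hderiv_zero, deriv_f ▸ hasDerivAt_f', convexOn_f, concaveOn_f, ?_⟩
  exact nonneg_of_convexOn_of_concaveOn three_sub_exp_one_pos.le three_sub_exp_one_lt_one.le
    convexOn_f concaveOn_f f_zero hderiv_zero.hasDerivWithinAt f_one
end
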